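/- If (x, y) is a point on the quartic curve (x^2 - y^2)^2 + 2a(x^2 + y^2) + b = 0 with x ≠ 0, then the point (X, Y) with X = (a^2 - b)y^2/x^2 and Y = (a^2 - b)y(b + ax^2 + ay^2)/x^3 satisfies Y^2 = X(X^2 + (2a^2+2b)X + (a^2-b)^2). -/
import Mathlib

/-- If `(x, y)` lies on the quartic `(x² - y²)² + 2a(x² + y²) + b = 0` with `x ≠ 0`,
then `X = (a² - b)y²/x²`, `Y = (a² - b)y(b + ax² + ay²)/x³` satisfy
`Y² = X(X² + (2a² + 2b)X + (a² - b)²)`. -/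
theorem stmt2 {K : Type*} [Field K] [CharZero K] (a b x y : K) (hx : x ≠ 0)
    (h : (x ^ 2 - y ^ 2) ^ 2 + 2 * a * (x ^ 2 + y ^ 2) + b = 0) :
    ((a ^ 2 - b) * y * (b + a * x ^ 2 + a * y ^ 2) / x ^ 3) ^ 2 =
      ((a ^ 2 - b) * y ^ 2 / x ^ 2) *
        (((a ^ 2 - b) * y ^ 2 / x ^ 2) ^ 2 +
          (2 * a ^ 2 + 2 * b) * ((a ^ 2 - b) * y ^ 2 / x ^ 2) + (a ^ 2 - b) ^ 2) := by
  have hb : b = -((x ^ 2 - y ^ 2) ^ 2 + 2 * a * (x ^ 2 + y ^ 2)) := by linear_combination h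
  subst hb
  field_simp
  ring
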